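/- arXiv:2511.14015 — 3 statements merged into one kernel-verified Lean document; each statement's English description precedes it below -/
import Mathlib

section
/- If X ∈ ℝ^{n₁×n₂} has rank exactly r, and p, q are index lists of length r such that the submatrix X(p,q) is invertible, then the CUR approximation is exact: X = X(:,q) X(p,q)⁻¹ X(p,:). -/
/-!
If `A = X(p,q)` is invertible, the `r` columns `C = X(:,q)` are independent, so they span an
`r`-dimensional subspace of the column space of `X`; when `rank X = r` they span all of it, and
`X = C W` for some `W`. Restricting to the rows `p` gives `X(p,:) = A W`, hence
`W = A⁻¹ X(p,:)`.
-/

open Matrix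

namespace Matrix

variable {m n ι K : Type*}

theorem range_mulVecLin_submatrix_id_le [CommSemiring K] [Fintype n] [Fintype ι]
    (X : Matrix m n K) (q : ι → n) :
    LinearMap.range (X.submatrix id q).mulVecLin ≤ LinearMap.range X.mulVecLin := by
  rw [range_mulVecLin, range_mulVecLin]
  exact Submodule.span_mono (Set.range_comp_subset_range q X.col)

theorem exists_mul_eq_of_range_mulVecLin_le [CommSemiring K] [Fintype n] [DecidableEq n]
    [Fintype ι] {X : Matrix m n K} {C : Matrix m ι K}
    (hle : LinearMap.range X.mulVecLin ≤ LinearMap.range C.mulVecLin) :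
    ∃ W : Matrix ι n K, C * W = X := by
  have hcol (j : n) : ∃ w, C *ᵥ w = X.col j := by
    simpa [mulVec_single_one] using hle (LinearMap.mem_range_self X.mulVecLin (Pi.single j 1))
  choose w hw using hcol
  refine ⟨(of w)ᵀ, ext fun i j => ?_⟩
  simpa [mul_apply, mulVec, dotProduct] using congrFun (hw j) i

variable [Field K] [Fintype n] [Fintype ι] [DecidableEq ι]

theorem range_mulVecLin_submatrix_id_eq {X : Matrix m n K} {p : ι → m} {q : ι → n}
    (hrank : X.rank ≤ Fintype.card ι) (h : IsUnit (X.submatrix p q)) :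
    LinearMap.range (X.submatrix id q).mulVecLin = LinearMap.range X.mulVecLin := by
  have hle := range_mulVecLin_submatrix_id_le X q
  refine Submodule.eq_of_le_of_finrank_eq hle (le_antisymm (Submodule.finrank_mono hle) ?_)
  calc Module.finrank K (LinearMap.range X.mulVecLin) = X.rank := rfl
    _ ≤ (X.submatrix p q).rank := by rwa [rank_of_isUnit _ h]
    _ = ((X.submatrix id q).submatrix p id).rank := by rw [submatrix_submatrix]; rfl
    _ ≤ (X.submatrix id q).rank := rank_submatrix_le _ _ _

theorem eq_submatrix_mul_inv_mul_submatrix {X : Matrix m n K} {p : ι → m} {q : ι → n}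
    (hrank : X.rank ≤ Fintype.card ι) (h : IsUnit (X.submatrix p q)) :
    X = X.submatrix id q * (X.submatrix p q)⁻¹ * X.submatrix p id := by
  classical
  obtain ⟨W, hW⟩ := exists_mul_eq_of_range_mulVecLin_le
    (range_mulVecLin_submatrix_id_eq hrank h).ge
  have hrows : X.submatrix p id = X.submatrix p q * W := by
    conv_lhs => rw [← hW, submatrix_mul _ _ _ id _ Function.bijective_id, submatrix_submatrix]
    rfl
  rw [hrows, Matrix.mul_assoc, nonsing_inv_mul_cancel_left _ _ ((isUnit_iff_isUnit_det _).mp h),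
    hW]

end Matrix

theorem cur_exact_of_rank_r {n₁ n₂ r : ℕ}
    (X : Matrix (Fin n₁) (Fin n₂) ℝ) (p : Fin r → Fin n₁) (q : Fin r → Fin n₂)
    (hrank : X.rank = r) (h : IsUnit (X.submatrix p q)) :
    X = X.submatrix id q * (X.submatrix p q)⁻¹ * X.submatrix p id :=
  eq_submatrix_mul_inv_mul_submatrix (by rw [hrank, Fintype.card_fin]) h
end

section
/- Let X(:,q) = U_q S₁ V₁ᵀ and X(p,:) = U₂ S₂ Y_pᵀ be factorizations where U_q ∈ ℝ^{n₁×r} and Y_p ∈ ℝ^{n₂×r} have orthonormal columns, and suppose U_q(p,:) and Y_p(q,:) are invertible. Define C = U_q(p,:)⁻¹ X(p,q) (Y_p(q,:)⁻¹)ᵀ and let C = R_U Σ R_Yᵀ be an SVD of C. Then the matrix X̂ = (U_q R_U) Σ (Y_p R_Y)ᵀ equals the interpolatory CUR approximation X(:,q) X(p,q)⁻¹ X(p,:), provided the columns of X(:,q) span the same space as U_q, so that X(:,q) = U_q U_qᵀ X(:,q), and analogously the rows of X(p,:) span the same space as the columns of Y_p, so that X(p,:) = X(p,:) Y_p Y_pᵀ.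 -/
open Matrix

private lemma submul_left {m n k r : ℕ} (A : Matrix (Fin m) (Fin n) ℝ)
    (B : Matrix (Fin n) (Fin k) ℝ) (p : Fin r → Fin m) :
    (A * B).submatrix p id = A.submatrix p id * B := by
  ext i j; simp [Matrix.mul_apply]

private lemma submul_right {m n k r : ℕ} (A : Matrix (Fin m) (Fin n) ℝ)
    (B : Matrix (Fin n) (Fin k) ℝ) (q : Fin r → Fin k) :
    (A * B).submatrix id q = A * B.submatrix id q := by
  ext i j; simp [Matrix.mul_apply]

theorem stable_cur_reproduces_cur {n₁ n₂ r : ℕ}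
    (X : Matrix (Fin n₁) (Fin n₂) ℝ)
    (p : Fin r → Fin n₁) (q : Fin r → Fin n₂)
    (Uq : Matrix (Fin n₁) (Fin r) ℝ) (Yp : Matrix (Fin n₂) (Fin r) ℝ)
    (RU Sig RY : Matrix (Fin r) (Fin r) ℝ)
    (hUq : Uqᵀ * Uq = 1) (hYp : Ypᵀ * Yp = 1)
    (hUqp : IsUnit (Uq.submatrix p id)) (hYpq : IsUnit (Yp.submatrix q id))
    (hRU : RUᵀ * RU = 1) (hRY : RYᵀ * RY = 1)
    (hXpq : IsUnit (X.submatrix p q))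
    (hcol : X.submatrix id q = Uq * (Uqᵀ * X.submatrix id q))
    (hrow : X.submatrix p id = (X.submatrix p id * Yp) * Ypᵀ)
    (hC : (Uq.submatrix p id)⁻¹ * X.submatrix p q * ((Yp.submatrix q id)⁻¹)ᵀ =
        RU * Sig * RYᵀ) :
    (Uq * RU) * Sig * (Yp * RY)ᵀ =
      X.submatrix id q * (X.submatrix p q)⁻¹ * X.submatrix p id := by
  set M := Uqᵀ * X.submatrix id q with hM
  set N := X.submatrix p id * Yp with hN
  have hUqd := (Matrix.isUnit_iff_isUnit_det _).mp hUqp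
  have hYpd := (Matrix.isUnit_iff_isUnit_det _).mp hYpq
  have hXd := (Matrix.isUnit_iff_isUnit_det _).mp hXpq
  -- X(p,q) = Uq(p) * M
  have hA : X.submatrix p q = Uq.submatrix p id * M := by
    have := congrArg (fun A => A.submatrix p id) hcol
    simpa [Matrix.submatrix_submatrix, Function.comp, submul_left] using this
  -- X(p,q) = N * Yp(q)ᵀ
  have hB : X.submatrix p q = N * (Yp.submatrix q id)ᵀ := by
    have := congrArg (fun A => A.submatrix id q) hrow
    simpa [Matrix.submatrix_submatrix, Function.comp, submul_right] using this
  have hMeq : M = (Uq.submatrix p id)⁻¹ * X.submatrix p q := by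
    rw [hA, ← Matrix.mul_assoc, Matrix.nonsing_inv_mul _ hUqd, Matrix.one_mul]
  have hNeq : N = X.submatrix p q * ((Yp.submatrix q id)⁻¹)ᵀ := by
    have hdT : IsUnit (Yp.submatrix q id)ᵀ.det := by
      rw [Matrix.det_transpose]; exact hYpd
    rw [Matrix.transpose_nonsing_inv, hB, Matrix.mul_assoc,
      Matrix.mul_nonsing_inv _ hdT, Matrix.mul_one]
  calc (Uq * RU) * Sig * (Yp * RY)ᵀ
      = Uq * (RU * Sig * RYᵀ) * Ypᵀ := by
        simp only [Matrix.transpose_mul, Matrix.mul_assoc]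
    _ = Uq * ((Uq.submatrix p id)⁻¹ * X.submatrix p q * ((Yp.submatrix q id)⁻¹)ᵀ) * Ypᵀ := by
        rw [hC]
    _ = Uq * M * (((Yp.submatrix q id)⁻¹)ᵀ * Ypᵀ) := by
        rw [hMeq]; simp only [Matrix.mul_assoc]
    _ = Uq * M * ((X.submatrix p q)⁻¹ * (X.submatrix p q * (((Yp.submatrix q id)⁻¹)ᵀ * Ypᵀ))) := by
        rw [← Matrix.mul_assoc (X.submatrix p q)⁻¹, Matrix.nonsing_inv_mul _ hXd,
          Matrix.one_mul]
    _ = X.submatrix id q * (X.submatrix p q)⁻¹ * X.submatrix p id := by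
        rw [hcol, hrow, hNeq]
        simp only [Matrix.mul_assoc]
end

section
/- Let U ∈ ℝ^{n×r} have orthonormal columns and let p be a row index list of length r with U(p,:) invertible. Then for any x ∈ ℝ^n in the column space of U, the oblique interpolation x̂ = U U(p,:)⁻¹ x(p) recovers x exactly: x̂ = x. Moreover, for general x ∈ ℝ^n, with x̂ = U U(p,:)⁻¹ x(p), we have ‖x − x̂‖₂ ≤ (1 + ‖U(p,:)⁻¹‖₂)‖(I − UUᵀ)x‖₂. -/
open Matrix

/-- Euclidean norm of a real vector. -/
noncomputable def enorm₂ {n : ℕ} (x : Fin n → ℝ) : ℝ :=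
  ‖(WithLp.equiv 2 (Fin n → ℝ)).symm x‖

/-- Operator 2-norm (spectral norm) of a real matrix. -/
noncomputable def opnorm {m n : ℕ} (M : Matrix (Fin m) (Fin n) ℝ) : ℝ :=
  ‖LinearMap.toContinuousLinearMap (Matrix.toEuclideanLin M)‖

lemma enorm_mulVec_le {m n : ℕ} (M : Matrix (Fin m) (Fin n) ℝ) (v : Fin n → ℝ) :
    enorm₂ (M.mulVec v) ≤ opnorm M * enorm₂ v := by
  have := (LinearMap.toContinuousLinearMap (Matrix.toEuclideanLin M)).le_opNorm
    ((WithLp.equiv 2 (Fin n → ℝ)).symm v)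
  simpa [enorm₂, opnorm, Matrix.toEuclideanLin_apply_piLp_toLp] using this

lemma enorm_sq {n : ℕ} (x : Fin n → ℝ) : enorm₂ x = Real.sqrt (x ⬝ᵥ x) := by
  rw [enorm₂, EuclideanSpace.norm_eq]
  congr 1
  simp [dotProduct, sq]

lemma enorm_triangle {n : ℕ} (x y : Fin n → ℝ) :
    enorm₂ (x + y) ≤ enorm₂ x + enorm₂ y := by
  simpa [enorm₂] using norm_add_le ((WithLp.equiv 2 (Fin n → ℝ)).symm x)
    ((WithLp.equiv 2 (Fin n → ℝ)).symm y)

lemma enorm_mulVec_isometry {n r : ℕ} (U : Matrix (Fin n) (Fin r) ℝ)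
    (hU : Uᵀ * U = 1) (v : Fin r → ℝ) : enorm₂ (U.mulVec v) = enorm₂ v := by
  rw [enorm_sq, enorm_sq]
  congr 1
  have h : v ⬝ᵥ (Uᵀ * U) *ᵥ v = U *ᵥ v ⬝ᵥ U *ᵥ v := by
    rw [← Matrix.mulVec_mulVec, Matrix.dotProduct_mulVec, Matrix.vecMul_transpose]
  rw [← h, hU, Matrix.one_mulVec]

lemma enorm_comp_le {n r : ℕ} (p : Fin r → Fin n) (hp : Function.Injective p)
    (x : Fin n → ℝ) : enorm₂ (fun i => x (p i)) ≤ enorm₂ x := by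
  rw [enorm_sq, enorm_sq]
  apply Real.sqrt_le_sqrt
  simp only [dotProduct]
  calc ∑ i, x (p i) * x (p i) = ∑ j ∈ Finset.univ.image p, x j * x j := by
        rw [Finset.sum_image (fun a _ b _ h => hp h)]
  _ ≤ ∑ j, x j * x j := Finset.sum_le_sum_of_subset_of_nonneg
        (Finset.subset_univ _) (fun j _ _ => mul_self_nonneg _)

theorem deim_oblique_projection {n r : ℕ}
    (U : Matrix (Fin n) (Fin r) ℝ) (p : Fin r → Fin n)
    (hU : Uᵀ * U = 1) (hp : IsUnit (U.submatrix p id)) :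
    (∀ x : Fin n → ℝ, (∃ c : Fin r → ℝ, x = U.mulVec c) →
      U.mulVec ((U.submatrix p id)⁻¹.mulVec (fun i => x (p i))) = x) ∧
    (∀ x : Fin n → ℝ,
      enorm₂ (x - U.mulVec ((U.submatrix p id)⁻¹.mulVec (fun i => x (p i)))) ≤
        (1 + opnorm (U.submatrix p id)⁻¹) *
          enorm₂ ((1 - U * Uᵀ).mulVec x)) := by
  set A := U.submatrix p id with hA
  have hAinv : A⁻¹ * A = 1 := Matrix.nonsing_inv_mul A ((Matrix.isUnit_iff_isUnit_det A).mp hp)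
  have hpinj : Function.Injective p := by
    intro i j hij
    by_contra hne
    have hdet : A.det = 0 := Matrix.det_zero_of_row_eq hne (by
      funext k; simp [hA, Matrix.submatrix, hij])
    exact (by simpa [hdet] using (Matrix.isUnit_iff_isUnit_det A).mp hp : IsUnit (0 : ℝ)).ne_zero rfl
  have part1 : ∀ x : Fin n → ℝ, (∃ c : Fin r → ℝ, x = U.mulVec c) →
      U.mulVec (A⁻¹.mulVec (fun i => x (p i))) = x := by
    rintro x ⟨c, rfl⟩
    have hxp : (fun i => U.mulVec c (p i)) = A.mulVec c := by
      funext i; simp [Matrix.mulVec, Matrix.submatrix, dotProduct, hA]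
    rw [hxp, show A⁻¹ *ᵥ (A *ᵥ c) = c by
      rw [Matrix.mulVec_mulVec, hAinv, Matrix.one_mulVec]]
  refine ⟨part1, fun x => ?_⟩
  set y := (1 - U * Uᵀ).mulVec x with hy
  set z := U.mulVec (Uᵀ.mulVec x) with hz
  have hdecomp : x = z + y := by
    rw [hy, hz, Matrix.sub_mulVec, Matrix.one_mulVec, Matrix.mulVec_mulVec]
    abel
  have hPx : U.mulVec (A⁻¹.mulVec (fun i => z (p i))) = z := part1 _ ⟨_, hz⟩
  have key : x - U.mulVec (A⁻¹.mulVec (fun i => x (p i)))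
      = y - U.mulVec (A⁻¹.mulVec (fun i => y (p i))) := by
    have hxp : (fun i => x (p i)) =
        (fun i => z (p i)) + (fun i => y (p i)) := by
      funext i
      conv_lhs => rw [hdecomp]
      simp
    rw [hxp, Matrix.mulVec_add, Matrix.mulVec_add, hPx]
    rw [hdecomp]
    abel
  rw [key]
  have h1 : enorm₂ (y - U.mulVec (A⁻¹.mulVec (fun i => y (p i)))) ≤
      enorm₂ y + enorm₂ (U.mulVec (A⁻¹.mulVec (fun i => y (p i)))) := by
    have := enorm_triangle y (-(U.mulVec (A⁻¹.mulVec (fun i => y (p i)))))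
    simpa [enorm₂, sub_eq_add_neg] using this
  have h2 : enorm₂ (U.mulVec (A⁻¹.mulVec (fun i => y (p i)))) ≤ opnorm A⁻¹ * enorm₂ y := by
    rw [enorm_mulVec_isometry U hU]
    calc enorm₂ (A⁻¹.mulVec (fun i => y (p i))) ≤ opnorm A⁻¹ * enorm₂ (fun i => y (p i)) :=
          enorm_mulVec_le _ _
    _ ≤ opnorm A⁻¹ * enorm₂ y :=
        mul_le_mul_of_nonneg_left (enorm_comp_le p hpinj y) (norm_nonneg _)
  calc enorm₂ (y - U.mulVec (A⁻¹.mulVec (fun i => y (p i)))) ≤ enorm₂ y + opnorm A⁻¹ * enorm₂ y :=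
        le_trans h1 (by linarith)
  _ = (1 + opnorm A⁻¹) * enorm₂ y := by ring
end
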